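/- For every integer ℓ ≥ 1 and every λ ∈ [0, δ], the ℓ-th derivative of ρ satisfies (1/ℓ!)·|ρ^{(ℓ)}(λ)| ≤ x·(2 − δ)^{ℓ−1} / (1 − δ)^{2ℓ}. -/

import Mathlib

open MeasureTheory

/-- `φ⁻¹(ℓ)`: tuples `c = (c(1), …, c(ℓ))` of nonnegative integers with
`Σ_{i=1}^ℓ i·c(i) = ℓ` (here `c i` stands for `c(i+1)` for `i : Fin ℓ`). -/
def parts (ℓ : ℕ) : Type := {c : Fin ℓ → ℕ // ∑ i : Fin ℓ, (i.1 + 1) * c i = ℓ}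

/-- `|z| = Σ_{i≥1} z(i)` (sequences are indexed from `1`; `z 0 = 0` by convention). -/
noncomputable def znorm (z : ℕ → ℝ) : ℝ := ∑' i, z i

/-- `ψ_λ(z) = Σ_{i≥1} z(i)·λ^i`. -/
noncomputable def psi (lam : ℝ) (z : ℕ → ℝ) : ℝ := ∑' i, z i * lam ^ i

/-- `ρ(λ) = E[ x·e^{−|z|·Γ/x}·(e^{ψ_λ(z)·Γ/x} − 1) ]`. -/
noncomputable def rho {Ω : Type*} [MeasureSpace Ω] (Γ : Ω → ℝ) (x : ℝ) (z : ℕ → ℝ) :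
    ℝ → ℝ :=
  fun lam =>
    ∫ ω, x * Real.exp (-(znorm z * Γ ω) / x) * (Real.exp (psi lam z * Γ ω / x) - 1)

/-! ### Auxiliary material -/

open Metric in
lemma my_norm_exp_sub_one_le (v : ℂ) : ‖Complex.exp v - 1‖ ≤ Real.exp ‖v‖ - 1 := by
  have hs : HasSum (fun n : ℕ => v ^ n / n.factorial) (Complex.exp v) := by
    rw [Complex.exp_eq_exp_ℂ]
    exact NormedSpace.expSeries_div_hasSum_exp v
  have hr : HasSum (fun n : ℕ => ‖v‖ ^ n / n.factorial) (Real.exp ‖v‖) := by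
    rw [Real.exp_eq_exp_ℝ]
    exact NormedSpace.expSeries_div_hasSum_exp ‖v‖
  have hs1 : HasSum (fun n : ℕ => v ^ (n + 1) / (n + 1).factorial) (Complex.exp v - 1) := by
    have h2 := (hasSum_nat_add_iff' (f := fun n : ℕ => v ^ n / n.factorial) 1).2 hs
    simpa using h2
  have hr1 : HasSum (fun n : ℕ => ‖v‖ ^ (n + 1) / (n + 1).factorial) (Real.exp ‖v‖ - 1) := by
    have h2 := (hasSum_nat_add_iff' (f := fun n : ℕ => ‖v‖ ^ n / n.factorial) 1).2 hr
    simpa using h2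
  calc ‖Complex.exp v - 1‖ = ‖∑' n : ℕ, v ^ (n + 1) / (n + 1).factorial‖ := by
        rw [hs1.tsum_eq]
    _ ≤ ∑' n : ℕ, ‖v ^ (n + 1) / ((n + 1).factorial : ℂ)‖ :=
        norm_tsum_le_tsum_norm (by
          have : (fun n : ℕ => ‖v ^ (n + 1) / ((n + 1).factorial : ℂ)‖)
              = fun n : ℕ => ‖v‖ ^ (n + 1) / (n + 1).factorial := by
            funext n
            simp [norm_div, norm_pow, Complex.norm_natCast]
          rw [this]; exact hr1.summable)
    _ = Real.exp ‖v‖ - 1 := by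
        rw [← hr1.tsum_eq]
        congr 1; funext n
        simp [norm_div, norm_pow, Complex.norm_natCast]

open Metric in
lemma my_cauchy_bound {f : ℂ → ℂ} {c : ℂ} {R M : ℝ} (hR : 0 < R)
    (hf : DifferentiableOn ℂ f (closedBall c R))
    (hb : ∀ w ∈ closedBall c R, ‖f w‖ ≤ M) (n : ℕ) :
    ‖iteratedDeriv n f c‖ ≤ n.factorial * M / R ^ n := by
  lift R to NNReal using hR.le with R' hR'
  have hR0 : (0 : ℝ) < R' := hR
  have h : HasFPowerSeriesOnBall f (cauchyPowerSeries f c R') c R' :=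
    hf.hasFPowerSeriesOnBall (by exact_mod_cast hR0)
  have key : iteratedDeriv n f c = (n.factorial : ℂ) • (cauchyPowerSeries f c R' n fun _ => 1) := by
    rw [iteratedDeriv_eq_iteratedFDeriv, ← h.factorial_smul (1 : ℂ) n]
    simp [nsmul_eq_mul, smul_eq_mul]
  have hsphere : ∀ θ : ℝ, circleMap c R' θ ∈ closedBall c (R' : ℝ) := by
    intro θ
    have : circleMap c R' θ ∈ sphere c |(R' : ℝ)| := circleMap_mem_sphere' c R' θ
    rw [abs_of_pos hR0] at this
    exact sphere_subset_closedBall this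
  have hcoef : ‖cauchyPowerSeries f c R' n fun _ => (1 : ℂ)‖ ≤ M / R' ^ n := by
    have h1 : ‖cauchyPowerSeries f c R' n fun _ => (1 : ℂ)‖ ≤ ‖cauchyPowerSeries f c R' n‖ := by
      have := (cauchyPowerSeries f c R' n).le_opNorm fun _ => (1 : ℂ)
      simpa using this
    have h2 := norm_cauchyPowerSeries_le f c R' n
    have hcont : Continuous fun θ : ℝ => ‖f (circleMap c R' θ)‖ := by
      apply Continuous.norm
      exact hf.continuousOn.comp_continuous (continuous_circleMap c R') hsphere
    have hint : ∫ θ : ℝ in (0)..2 * Real.pi, ‖f (circleMap c R' θ)‖ ≤ 2 * Real.pi * M := by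
      have := intervalIntegral.integral_mono_on Real.two_pi_pos.le
        (hcont.intervalIntegrable 0 (2 * Real.pi)) (intervalIntegrable_const (μ := volume))
        (fun θ _ => hb _ (hsphere θ))
      rw [intervalIntegral.integral_const, smul_eq_mul, sub_zero] at this
      exact this
    have h3 : ‖cauchyPowerSeries f c R' n‖ ≤ M * |(R' : ℝ)|⁻¹ ^ n := by
      refine h2.trans ?_
      have hstep : (2 * Real.pi)⁻¹ * ∫ θ : ℝ in (0)..2 * Real.pi, ‖f (circleMap c R' θ)‖ ≤
          (2 * Real.pi)⁻¹ * (2 * Real.pi * M) :=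
        mul_le_mul_of_nonneg_left hint (by positivity)
      have heq : (2 * Real.pi)⁻¹ * (2 * Real.pi * M) = M := by
        field_simp
      refine mul_le_mul_of_nonneg_right (hstep.trans_eq heq) (by positivity)
    refine h1.trans (h3.trans_eq ?_)
    rw [abs_of_pos hR0, div_eq_mul_inv, inv_pow]
  rw [key, norm_smul]
  simp only [Complex.norm_natCast]
  calc (n.factorial : ℝ) * ‖cauchyPowerSeries f c R' n fun _ => (1 : ℂ)‖
      ≤ (n.factorial : ℝ) * (M / R' ^ n) :=
        mul_le_mul_of_nonneg_left hcoef (by positivity)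
    _ = n.factorial * M / R' ^ n := by ring

/-- Complex extension of `ψ_·(z)`. -/
noncomputable def PsiC (z : ℕ → ℝ) (w : ℂ) : ℂ := ∑' i, (z i : ℂ) * w ^ i

/-- Formal derivative of `PsiC`. -/
noncomputable def PsiCd (z : ℕ → ℝ) (w : ℂ) : ℂ := ∑' i, (z i : ℂ) * (i * w ^ (i - 1))

/-- `Σ_i i t^(i-1)`. -/
noncomputable def Bgeo (t : ℝ) : ℝ := ∑' i : ℕ, (i : ℝ) * t ^ (i - 1)

section PsiLemmas

open Metric

variable {z : ℕ → ℝ}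

lemma summable_zpow_real (hz0 : ∀ i, 0 ≤ z i) (hzs : Summable z) {t : ℝ} (h0 : 0 ≤ t)
    (h1 : t ≤ 1) : Summable fun i => z i * t ^ i := by
  apply hzs.of_nonneg_of_le (fun i => mul_nonneg (hz0 i) (pow_nonneg h0 i))
  intro i
  calc z i * t ^ i ≤ z i * 1 :=
        mul_le_mul_of_nonneg_left (pow_le_one₀ h0 h1) (hz0 i)
    _ = z i := mul_one _

lemma psiC_ofReal {lam : ℝ} : PsiC z lam = ((psi lam z : ℝ) : ℂ) := by
  rw [PsiC, psi, Complex.ofReal_tsum]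
  congr 1; funext i; push_cast; ring

lemma norm_psiC_le (hz0 : ∀ i, 0 ≤ z i) (hzs : Summable z) {w : ℂ} (hw : ‖w‖ ≤ 1) :
    ‖PsiC z w‖ ≤ psi ‖w‖ z := by
  rw [PsiC, psi]
  refine (norm_tsum_le_tsum_norm ?_).trans_eq ?_
  · apply ((summable_zpow_real hz0 hzs (norm_nonneg w) hw)).congr
    intro i
    rw [norm_mul, norm_pow, Complex.norm_real, Real.norm_of_nonneg (hz0 i)]
  · congr 1; funext i
    rw [norm_mul, norm_pow, Complex.norm_real, Real.norm_of_nonneg (hz0 i)]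

lemma psi_le_znorm (hz0 : ∀ i, 0 ≤ z i) (hzs : Summable z) {t : ℝ} (h0 : 0 ≤ t) (h1 : t ≤ 1) :
    psi t z ≤ znorm z := by
  apply Summable.tsum_le_tsum _ (summable_zpow_real hz0 hzs h0 h1) hzs
  intro i
  calc z i * t ^ i ≤ z i * 1 := mul_le_mul_of_nonneg_left (pow_le_one₀ h0 h1) (hz0 i)
    _ = z i := mul_one _

lemma psi_nonneg (hz0 : ∀ i, 0 ≤ z i) {t : ℝ} (h0 : 0 ≤ t) : 0 ≤ psi t z :=
  tsum_nonneg fun i => mul_nonneg (hz0 i) (pow_nonneg h0 i)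

lemma psi_lt_znorm (hz0 : ∀ i, 0 ≤ z i) (hzs : Summable z) (hzz : z 0 = 0)
    (hzne : ∃ i, z i ≠ 0) {t : ℝ} (h0 : 0 ≤ t) (h1 : t < 1) :
    psi t z < znorm z := by
  obtain ⟨j, hj⟩ := hzne
  have hj0 : j ≠ 0 := fun h => hj (h ▸ hzz)
  have hjpos : 0 < z j := lt_of_le_of_ne (hz0 j) (Ne.symm hj)
  apply Summable.tsum_lt_tsum_of_nonneg
    (fun i => mul_nonneg (hz0 i) (pow_nonneg h0 i))
    (fun i => by
      calc z i * t ^ i ≤ z i * 1 := mul_le_mul_of_nonneg_left (pow_le_one₀ h0 h1.le) (hz0 i)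
        _ = z i := mul_one _)
    (i := j) _ hzs
  calc z j * t ^ j < z j * 1 := by
        apply mul_lt_mul_of_pos_left _ hjpos
        exact pow_lt_one₀ h0 h1 hj0
    _ = z j := mul_one _

lemma summable_igeo {t : ℝ} (h0 : 0 ≤ t) (h1 : t < 1) :
    Summable fun i : ℕ => (i : ℝ) * t ^ (i - 1) := by
  have h := summable_pow_mul_geometric_of_norm_lt_one (R := ℝ) 1
    (by rwa [Real.norm_of_nonneg h0])
  rcases eq_or_lt_of_le h0 with h0' | h0'
  · apply summable_of_ne_finset_zero (s := {0, 1})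
    intro i hi
    simp only [Finset.mem_insert, Finset.mem_singleton] at hi
    push_neg at hi
    rw [← h0', zero_pow, mul_zero]
    omega
  · apply ((h.mul_left t⁻¹).congr _)
    intro i
    cases i with
    | zero => simp
    | succ n =>
      simp only [pow_one, Nat.add_sub_cancel]
      rw [pow_succ]
      field_simp

lemma bgeo_nonneg {t : ℝ} (h0 : 0 ≤ t) : 0 ≤ Bgeo t :=
  tsum_nonneg fun i => mul_nonneg (Nat.cast_nonneg i) (pow_nonneg h0 _)

lemma norm_psiCd_le (hz0 : ∀ i, 0 ≤ z i) (hzs : Summable z) (hz1 : znorm z ≤ 1)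
    {t : ℝ} (h0 : 0 ≤ t) (h1 : t < 1) {w : ℂ} (hw : ‖w‖ ≤ t) :
    ‖PsiCd z w‖ ≤ Bgeo t := by
  have hz_le_one : ∀ i, z i ≤ 1 := fun i =>
    ((Summable.le_tsum hzs i fun j _ => hz0 j).trans hz1)
  have hterm : ∀ i : ℕ, ‖(z i : ℂ) * (i * w ^ (i - 1))‖ ≤ (i : ℝ) * t ^ (i - 1) := by
    intro i
    rw [norm_mul, norm_mul, norm_pow, Complex.norm_real, Real.norm_of_nonneg (hz0 i),
      Complex.norm_natCast]
    calc z i * ((i : ℝ) * ‖w‖ ^ (i - 1)) ≤ 1 * ((i : ℝ) * t ^ (i - 1)) := by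
          apply mul_le_mul (hz_le_one i) _ (by positivity) one_pos.le
          exact mul_le_mul_of_nonneg_left (pow_le_pow_left₀ (norm_nonneg w) hw _)
            (Nat.cast_nonneg i)
      _ = (i : ℝ) * t ^ (i - 1) := one_mul _
  rw [PsiCd]
  refine (norm_tsum_le_tsum_norm ?_).trans ?_
  · exact (summable_igeo h0 h1).of_nonneg_of_le (fun i => norm_nonneg _) hterm
  · exact Summable.tsum_le_tsum hterm
      ((summable_igeo h0 h1).of_nonneg_of_le (fun i => norm_nonneg _) hterm)
      (summable_igeo h0 h1)

lemma hasDerivAt_psiC (hz0 : ∀ i, 0 ≤ z i) (hzs : Summable z) (hz1 : znorm z ≤ 1)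
    {w : ℂ} (hw : ‖w‖ < 1) : HasDerivAt (PsiC z) (PsiCd z w) w := by
  have hz_le_one : ∀ i, z i ≤ 1 := fun i =>
    ((Summable.le_tsum hzs i fun j _ => hz0 j).trans hz1)
  set t₀ : ℝ := (1 + ‖w‖) / 2 with ht₀
  have h0t : 0 < t₀ := by positivity
  have hwt : ‖w‖ < t₀ := by rw [ht₀]; linarith
  have ht1 : t₀ < 1 := by rw [ht₀]; linarith [norm_nonneg w]
  have := hasDerivAt_tsum_of_isPreconnected
    (u := fun i : ℕ => (i : ℝ) * t₀ ^ (i - 1))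
    (g := fun i y => (z i : ℂ) * y ^ i)
    (g' := fun i y => (z i : ℂ) * (i * y ^ (i - 1)))
    (summable_igeo h0t.le ht1) (Metric.isOpen_ball (x := (0:ℂ)) (ε := t₀))
    ((convex_ball (0:ℂ) t₀).isPreconnected)
    (fun i y _ => by
      simpa using ((hasDerivAt_pow i y).const_mul (z i : ℂ)))
    (fun i y hy => by
      rw [norm_mul, norm_mul, norm_pow, Complex.norm_real, Real.norm_of_nonneg (hz0 i),
        Complex.norm_natCast]
      have hyt : ‖y‖ ≤ t₀ := by
        rw [mem_ball, dist_zero_right] at hy; exact hy.le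
      calc z i * ((i : ℝ) * ‖y‖ ^ (i - 1)) ≤ 1 * ((i : ℝ) * t₀ ^ (i - 1)) := by
            apply mul_le_mul (hz_le_one i) _ (by positivity) one_pos.le
            exact mul_le_mul_of_nonneg_left (pow_le_pow_left₀ (norm_nonneg y) hyt _)
              (Nat.cast_nonneg i)
        _ = (i : ℝ) * t₀ ^ (i - 1) := one_mul _)
    (y₀ := 0) (by rwa [mem_ball, dist_zero_right, norm_zero])
    (by
      apply Summable.of_norm
      apply hzs.of_nonneg_of_le (fun i => norm_nonneg _)
      intro i
      rw [norm_mul, norm_pow, Complex.norm_real, Real.norm_of_nonneg (hz0 i), norm_zero]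
      cases i with
      | zero => simp
      | succ n => simp [zero_pow, hz0])
    (by rwa [mem_ball, dist_zero_right])
  exact this

lemma my_mul_exp_neg_le {u c : ℝ} (hu : 0 ≤ u) (hc : 0 < c) :
    u * Real.exp (-(c * u)) ≤ 1 / c := by
  rw [le_div_iff₀ hc]
  have h1 : c * u ≤ Real.exp (c * u) := by
    have := Real.add_one_le_exp (c * u)
    linarith
  calc u * Real.exp (-(c * u)) * c = (c * u) * Real.exp (-(c * u)) := by ring
    _ ≤ Real.exp (c * u) * Real.exp (-(c * u)) :=
        mul_le_mul_of_nonneg_right h1 (Real.exp_pos _).le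
    _ = 1 := by rw [← Real.exp_add]; simp

end PsiLemmas

theorem stmt19 {Ω : Type*} [MeasureSpace Ω] [IsProbabilityMeasure (volume : Measure Ω)]
    (Γ : Ω → ℝ) (hΓm : Measurable Γ) (hΓ0 : ∀ ω, 0 ≤ Γ ω)
    (x δ : ℝ) (hx : 0 < x) (hδ : δ ∈ Set.Ioo (0 : ℝ) 1)
    (z : ℕ → ℝ) (hz0 : ∀ i, 0 ≤ z i) (hzz : z 0 = 0) (hzs : Summable z)
    (hzne : ∃ i, z i ≠ 0) (hz1 : znorm z ≤ 1) :
    ∀ ℓ : ℕ, 1 ≤ ℓ → ∀ lam ∈ Set.Icc (0 : ℝ) δ,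
      (1 / (Nat.factorial ℓ : ℝ)) *
          |iteratedDerivWithin ℓ (rho Γ x z) (Set.Icc 0 δ) lam| ≤
        x * (2 - δ) ^ (ℓ - 1) / (1 - δ) ^ (2 * ℓ) := by
  obtain ⟨hδ0, hδ1⟩ := hδ
  set a : ℝ := znorm z with ha
  have ha0 : 0 ≤ a := tsum_nonneg hz0
  -- the complex extension
  set F : ℂ → Ω → ℂ := fun w ω =>
    (x : ℂ) * Complex.exp ((-(a * Γ ω) / x : ℝ) : ℂ) *
      (Complex.exp (PsiC z w * (Γ ω : ℂ) / (x : ℂ)) - 1) with hF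
  set Fc : ℂ → ℂ := fun w => ∫ ω, F w ω with hFc
  -- pointwise norm bound
  have hFnorm : ∀ w : ℂ, ‖w‖ ≤ 1 → ∀ ω, ‖F w ω‖ ≤ x := by
    intro w hw ω
    have hu : 0 ≤ Γ ω / x := div_nonneg (hΓ0 ω) hx.le
    have hpsi_le : ‖PsiC z w‖ ≤ a :=
      (norm_psiC_le hz0 hzs hw).trans (psi_le_znorm hz0 hzs (norm_nonneg w) hw)
    rw [hF]
    simp only [norm_mul, Complex.norm_real, Real.norm_of_nonneg hx.le]
    rw [← Complex.ofReal_exp, Complex.norm_real, Real.norm_of_nonneg (Real.exp_pos _).le]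
    have h1 : ‖Complex.exp (PsiC z w * (Γ ω : ℂ) / (x : ℂ)) - 1‖ ≤
        Real.exp (a * (Γ ω / x)) - 1 := by
      refine (my_norm_exp_sub_one_le _).trans ?_
      have : ‖PsiC z w * (Γ ω : ℂ) / (x : ℂ)‖ ≤ a * (Γ ω / x) := by
        rw [norm_div, norm_mul, Complex.norm_real, Complex.norm_real,
          Real.norm_of_nonneg (hΓ0 ω), Real.norm_of_nonneg hx.le, ← mul_div_assoc]
        rw [mul_div_assoc, mul_div_assoc]
        exact mul_le_mul_of_nonneg_right hpsi_le hu
      have h2 := Real.exp_le_exp.2 this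
      linarith
    calc x * Real.exp (-(a * Γ ω) / x) * ‖Complex.exp (PsiC z w * (Γ ω : ℂ) / (x : ℂ)) - 1‖
        ≤ x * Real.exp (-(a * Γ ω) / x) * (Real.exp (a * (Γ ω / x)) - 1) := by
          apply mul_le_mul_of_nonneg_left h1 (by positivity)
      _ = x * (1 - Real.exp (-(a * Γ ω) / x)) := by
          have hx0 : -(a * Γ ω) / x + a * (Γ ω / x) = 0 := by field_simp; ring
          rw [mul_sub, mul_one, mul_assoc, ← Real.exp_add, hx0, Real.exp_zero]
          ring
      _ ≤ x * 1 := by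
          apply mul_le_mul_of_nonneg_left _ hx.le
          have := (Real.exp_pos (-(a * Γ ω) / x)).le
          linarith
      _ = x := mul_one x
  -- measurability of the integrand
  have hFmeas : ∀ w : ℂ, AEStronglyMeasurable (F w) volume := by
    intro w
    have hcont : Continuous fun r : ℝ => (x : ℂ) * Complex.exp ((-(a * r) / x : ℝ) : ℂ) *
        (Complex.exp (PsiC z w * (r : ℂ) / (x : ℂ)) - 1) := by
      apply Continuous.mul
      · apply continuous_const.mul
        exact Complex.continuous_exp.comp (Complex.continuous_ofReal.comp (by continuity))
      · exact (Complex.continuous_exp.comp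
          ((continuous_const.mul Complex.continuous_ofReal).div_const _)).sub continuous_const
    exact (hcont.measurable.comp hΓm).aestronglyMeasurable
  have hFint : ∀ w : ℂ, ‖w‖ ≤ 1 → Integrable (F w) volume := fun w hw =>
    Integrable.mono' (integrable_const x) (hFmeas w)
      (Filter.Eventually.of_forall (hFnorm w hw))
  -- derivative of the integrand
  set Fd : ℂ → Ω → ℂ := fun w ω =>
    (x : ℂ) * Complex.exp ((-(a * Γ ω) / x : ℝ) : ℂ) *
      (Complex.exp (PsiC z w * (Γ ω : ℂ) / (x : ℂ)) * (PsiCd z w * (Γ ω : ℂ) / (x : ℂ)))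
    with hFd
  have hFdmeas : ∀ w : ℂ, AEStronglyMeasurable (Fd w) volume := by
    intro w
    have hcont : Continuous fun r : ℝ => (x : ℂ) * Complex.exp ((-(a * r) / x : ℝ) : ℂ) *
        (Complex.exp (PsiC z w * (r : ℂ) / (x : ℂ)) * (PsiCd z w * (r : ℂ) / (x : ℂ))) := by
      apply Continuous.mul
      · apply continuous_const.mul
        exact Complex.continuous_exp.comp (Complex.continuous_ofReal.comp (by continuity))
      · exact (Complex.continuous_exp.comp
          ((continuous_const.mul Complex.continuous_ofReal).div_const _)).mul
          ((continuous_const.mul Complex.continuous_ofReal).div_const _)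
    exact (hcont.measurable.comp hΓm).aestronglyMeasurable
  -- differentiability of `Fc` on the unit ball
  have hFcDeriv : ∀ w₀ : ℂ, ‖w₀‖ < 1 → DifferentiableAt ℂ Fc w₀ := by
    intro w₀ hw₀
    set ε : ℝ := (1 - ‖w₀‖) / 2 with hε
    have hεpos : 0 < ε := by rw [hε]; linarith
    set t₀ : ℝ := (1 + ‖w₀‖) / 2 with ht₀
    have h0t : 0 < t₀ := by positivity
    have ht₀1 : t₀ < 1 := by rw [ht₀]; linarith [norm_nonneg w₀]
    have hballnorm : ∀ w ∈ Metric.ball w₀ ε, ‖w‖ ≤ t₀ := by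
      intro w hwb
      rw [Metric.mem_ball, dist_eq_norm] at hwb
      calc ‖w‖ = ‖w - w₀ + w₀‖ := by ring_nf
        _ ≤ ‖w - w₀‖ + ‖w₀‖ := norm_add_le _ _
        _ ≤ ε + ‖w₀‖ := by linarith
        _ = t₀ := by rw [hε, ht₀]; ring
    have hc : 0 < a - psi t₀ z :=
      sub_pos.2 (psi_lt_znorm hz0 hzs hzz hzne h0t.le ht₀1)
    have hB0 : 0 ≤ Bgeo t₀ := bgeo_nonneg h0t.le
    have h_bound : ∀ ω, ∀ w ∈ Metric.ball w₀ ε,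
        ‖Fd w ω‖ ≤ x * Bgeo t₀ * (1 / (a - psi t₀ z)) := by
      intro ω w hwb
      have hwt : ‖w‖ ≤ t₀ := hballnorm w hwb
      set u : ℝ := Γ ω / x with hu'
      have hu : 0 ≤ u := div_nonneg (hΓ0 ω) hx.le
      have hpsiw : ‖PsiC z w‖ ≤ psi t₀ z := by
        refine (norm_psiC_le hz0 hzs (hwt.trans ht₀1.le)).trans ?_
        rw [psi, psi]
        apply Summable.tsum_le_tsum _ (summable_zpow_real hz0 hzs (norm_nonneg w)
          (hwt.trans ht₀1.le)) (summable_zpow_real hz0 hzs h0t.le ht₀1.le)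
        intro i
        exact mul_le_mul_of_nonneg_left (pow_le_pow_left₀ (norm_nonneg w) hwt i) (hz0 i)
      have hpsid : ‖PsiCd z w‖ ≤ Bgeo t₀ := norm_psiCd_le hz0 hzs hz1 h0t.le ht₀1 hwt
      have hψ0 : 0 ≤ psi t₀ z := psi_nonneg hz0 h0t.le
      rw [hFd]
      simp only [norm_mul, norm_div, Complex.norm_real, Real.norm_of_nonneg hx.le,
        Real.norm_of_nonneg (hΓ0 ω)]
      rw [← Complex.ofReal_exp, Complex.norm_real, Real.norm_of_nonneg (Real.exp_pos _).le]
      have hexp2 : ‖Complex.exp (PsiC z w * (Γ ω : ℂ) / (x : ℂ))‖ ≤ Real.exp (psi t₀ z * u) := by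
        rw [Complex.norm_exp]
        apply Real.exp_le_exp.2
        calc (PsiC z w * (Γ ω : ℂ) / (x : ℂ)).re ≤ ‖PsiC z w * (Γ ω : ℂ) / (x : ℂ)‖ :=
              Complex.re_le_norm _
          _ = ‖PsiC z w‖ * Γ ω / x := by
              rw [norm_div, norm_mul, Complex.norm_real, Complex.norm_real,
                Real.norm_of_nonneg (hΓ0 ω), Real.norm_of_nonneg hx.le]
          _ ≤ psi t₀ z * u := by
              rw [hu', ← mul_div_assoc]
              exact div_le_div_of_nonneg_right
                (mul_le_mul_of_nonneg_right hpsiw (hΓ0 ω)) hx.le |>.trans_eq rfl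
      calc x * Real.exp (-(a * Γ ω) / x) *
            (‖Complex.exp (PsiC z w * (Γ ω : ℂ) / (x : ℂ))‖ * (‖PsiCd z w‖ * Γ ω / x))
          ≤ x * Real.exp (-(a * Γ ω) / x) *
            (Real.exp (psi t₀ z * u) * (Bgeo t₀ * u)) := by
            apply mul_le_mul_of_nonneg_left _ (by positivity)
            apply mul_le_mul hexp2 _
              (div_nonneg (mul_nonneg (norm_nonneg _) (hΓ0 ω)) hx.le) (Real.exp_pos _).le
            rw [hu', ← mul_div_assoc]
            exact div_le_div_of_nonneg_right
              (mul_le_mul_of_nonneg_right hpsid (hΓ0 ω)) hx.le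
        _ = (x * Bgeo t₀) * (u * Real.exp (-((a - psi t₀ z) * u))) := by
            have hexps : Real.exp (-(a * Γ ω) / x) * Real.exp (psi t₀ z * u) =
                Real.exp (-((a - psi t₀ z) * u)) := by
              rw [← Real.exp_add]
              congr 1
              rw [hu']
              field_simp
              ring
            rw [show x * Real.exp (-(a * Γ ω) / x) * (Real.exp (psi t₀ z * u) * (Bgeo t₀ * u)) =
              (x * Bgeo t₀) * (u * (Real.exp (-(a * Γ ω) / x) * Real.exp (psi t₀ z * u)))
              from by ring, hexps]
        _ ≤ (x * Bgeo t₀) * (1 / (a - psi t₀ z)) := by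
            apply mul_le_mul_of_nonneg_left (my_mul_exp_neg_le hu hc) (by positivity)
        _ = x * Bgeo t₀ * (1 / (a - psi t₀ z)) := rfl
    have h_diff : ∀ ω, ∀ w ∈ Metric.ball w₀ ε, HasDerivAt (fun w => F w ω) (Fd w ω) w := by
      intro ω w hwb
      have hwt : ‖w‖ < 1 := lt_of_le_of_lt (hballnorm w hwb) ht₀1
      have hP : HasDerivAt (PsiC z) (PsiCd z w) w := hasDerivAt_psiC hz0 hzs hz1 hwt
      have h1 : HasDerivAt (fun w => PsiC z w * (Γ ω : ℂ) / (x : ℂ))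
          (PsiCd z w * (Γ ω : ℂ) / (x : ℂ)) w := (hP.mul_const _).div_const _
      have h2 := h1.cexp
      have h3 := h2.sub_const 1
      have h4 := h3.const_mul ((x : ℂ) * Complex.exp ((-(a * Γ ω) / x : ℝ) : ℂ))
      rw [hF, hFd]
      convert h4 using 1 <;> ring
    have hmain := hasDerivAt_integral_of_dominated_loc_of_deriv_le (Metric.ball_mem_nhds w₀ hεpos)
      (Filter.Eventually.of_forall fun w => hFmeas w)
      (hFint w₀ hw₀.le) (hFdmeas w₀)
      (Filter.Eventually.of_forall fun ω => h_bound ω)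
      (integrable_const _)
      (Filter.Eventually.of_forall fun ω => h_diff ω)
    exact hmain.2.differentiableAt
  -- `rho` is the real part of `Fc` on the reals
  have hrho : ∀ lam : ℝ, rho Γ x z lam = (Fc ↑lam).re := by
    intro lam
    have hpt : ∀ ω, F (↑lam) ω =
        ((x * Real.exp (-(znorm z * Γ ω) / x) *
          (Real.exp (psi lam z * Γ ω / x) - 1) : ℝ) : ℂ) := by
      intro ω
      rw [hF]
      simp only [psiC_ofReal (z := z) (lam := lam)]
      push_cast
      ring
    rw [hFc]
    simp only [hpt]
    have hio : (∫ ω, ((x * Real.exp (-(znorm z * Γ ω) / x) *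
          (Real.exp (psi lam z * Γ ω / x) - 1) : ℝ) : ℂ)) =
        ((∫ ω, x * Real.exp (-(znorm z * Γ ω) / x) *
          (Real.exp (psi lam z * Γ ω / x) - 1) : ℝ) : ℂ) := integral_ofReal
    rw [hio, Complex.ofReal_re, rho]
  -- analyticity of `Fc` and its iterated derivatives on the unit ball
  have hdiffOn : DifferentiableOn ℂ Fc (Metric.ball 0 1) := fun w hw =>
    (hFcDeriv w (by simpa [Metric.mem_ball, dist_zero_right] using hw)).differentiableWithinAt
  have hAn : AnalyticOnNhd ℂ Fc (Metric.ball 0 1) := hdiffOn.analyticOnNhd Metric.isOpen_ball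
  have hIter : ∀ n : ℕ, AnalyticOnNhd ℂ (iteratedDeriv n Fc) (Metric.ball 0 1) := by
    intro n
    induction n with
    | zero => simpa [iteratedDeriv_zero] using hAn
    | succ n ih =>
      rw [iteratedDeriv_succ]
      exact ih.deriv
  have hHD : ∀ n : ℕ, ∀ w : ℂ, ‖w‖ < 1 →
      HasDerivAt (iteratedDeriv n Fc) (iteratedDeriv (n + 1) Fc w) w := by
    intro n w hw
    have h1 := ((hIter n) w
      (by simpa [Metric.mem_ball, dist_zero_right] using hw)).differentiableAt.hasDerivAt
    rwa [iteratedDeriv_succ]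
  -- bridge between the real and complex iterated derivatives
  have hUD : UniqueDiffOn ℝ (Set.Icc (0 : ℝ) δ) := uniqueDiffOn_Icc hδ0
  have key : ∀ n : ℕ, ∀ lam ∈ Set.Icc (0 : ℝ) δ,
      iteratedDerivWithin n (rho Γ x z) (Set.Icc 0 δ) lam = (iteratedDeriv n Fc ↑lam).re := by
    intro n
    induction n with
    | zero =>
      intro lam hlam
      simp [iteratedDerivWithin_zero, iteratedDeriv_zero, hrho lam]
    | succ n ih =>
      intro lam hlam
      have hnorm : ‖(lam : ℂ)‖ < 1 := by
        rw [Complex.norm_real, Real.norm_of_nonneg hlam.1]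
        exact lt_of_le_of_lt hlam.2 hδ1
      rw [iteratedDerivWithin_succ]
      have hcongr : derivWithin (iteratedDerivWithin n (rho Γ x z) (Set.Icc 0 δ))
          (Set.Icc 0 δ) lam =
          derivWithin (fun t : ℝ => (iteratedDeriv n Fc ↑t).re) (Set.Icc 0 δ) lam :=
        derivWithin_congr ih (ih lam hlam)
      rw [hcongr]
      have hre : HasDerivAt (fun t : ℝ => (iteratedDeriv n Fc ↑t).re)
          ((iteratedDeriv (n + 1) Fc ↑lam).re) lam := (hHD n ↑lam hnorm).real_of_complex
      exact hre.hasDerivWithinAt.derivWithin (hUD lam hlam)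
  -- bound on `Fc`
  have hFcbd : ∀ w : ℂ, ‖w‖ ≤ 1 → ‖Fc w‖ ≤ x := by
    intro w hw
    rw [hFc]
    have := norm_integral_le_of_norm_le_const (μ := volume)
      (Filter.Eventually.of_forall (hFnorm w hw))
    simpa using this
  -- final computation
  intro ℓ hℓ lam hlam
  rw [key ℓ lam hlam]
  set R : ℝ := (1 - δ) ^ 2 with hRdef
  have hRpos : 0 < R := by rw [hRdef]; exact pow_pos (by linarith) 2
  have hclose : ∀ w ∈ Metric.closedBall (↑lam : ℂ) R, ‖w‖ < 1 := by
    intro w hw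
    rw [Metric.mem_closedBall, dist_eq_norm] at hw
    have h1 : ‖w‖ ≤ R + lam := by
      calc ‖w‖ = ‖w - ↑lam + ↑lam‖ := by ring_nf
        _ ≤ ‖w - ↑lam‖ + ‖(lam : ℂ)‖ := norm_add_le _ _
        _ ≤ R + lam := by
            rw [Complex.norm_real, Real.norm_of_nonneg hlam.1]
            linarith
    have h2 : R + lam ≤ (1 - δ) ^ 2 + δ := by rw [hRdef]; linarith [hlam.2]
    nlinarith [hδ0, hδ1]
  have hdOn : DifferentiableOn ℂ Fc (Metric.closedBall ↑lam R) := fun w hw =>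
    (hFcDeriv w (hclose w hw)).differentiableWithinAt
  have hbd : ∀ w ∈ Metric.closedBall (↑lam : ℂ) R, ‖Fc w‖ ≤ x := fun w hw =>
    hFcbd w (hclose w hw).le
  have hC := my_cauchy_bound hRpos hdOn hbd ℓ
  have hfacpos : (0 : ℝ) < (Nat.factorial ℓ : ℝ) := by positivity
  have hstep1 : (1 / (Nat.factorial ℓ : ℝ)) * |(iteratedDeriv ℓ Fc ↑lam).re| ≤
      x / (1 - δ) ^ (2 * ℓ) := by
    have habs : |(iteratedDeriv ℓ Fc ↑lam).re| ≤ ‖iteratedDeriv ℓ Fc ↑lam‖ :=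
      Complex.abs_re_le_norm _
    calc (1 / (Nat.factorial ℓ : ℝ)) * |(iteratedDeriv ℓ Fc ↑lam).re|
        ≤ (1 / (Nat.factorial ℓ : ℝ)) * (Nat.factorial ℓ * x / R ^ ℓ) := by
          apply mul_le_mul_of_nonneg_left (habs.trans hC) (by positivity)
      _ = x / R ^ ℓ := by field_simp
      _ = x / (1 - δ) ^ (2 * ℓ) := by rw [hRdef, ← pow_mul]
  refine hstep1.trans ?_
  have hone : (1 : ℝ) ≤ (2 - δ) ^ (ℓ - 1) := one_le_pow₀ (by linarith)
  calc x / (1 - δ) ^ (2 * ℓ) = x * 1 / (1 - δ) ^ (2 * ℓ) := by ring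
    _ ≤ x * (2 - δ) ^ (ℓ - 1) / (1 - δ) ^ (2 * ℓ) := by
        exact div_le_div_of_nonneg_right (mul_le_mul_of_nonneg_left hone hx.le)
          (pow_pos (by linarith : (0:ℝ) < 1 - δ) _).le
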